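/- arXiv:1209.2865 — 2 statements merged into one kernel-verified Lean document; each statement's English description precedes it below -/
import Mathlib

section
/- For every u ∈ (0, π/2) one has f₂(u) := −1 + 4u² + cos(4u) + u·sin(4u) > 0. -/
/-!
With `x = 4u` one has `4 f₂(u) = h(x)` where `h(x) = x² - 4 + 4 cos x + x sin x`, so it suffices
to show `h > 0` on `(0, 2π)`. The functions `h`, `h'` and
`h''(x) = 2 - 2 cos x - x sin x = 4 sin(x/2) (sin(x/2) - (x/2) cos(x/2))` all vanish at `0`, and
`y ↦ sin y - y cos y` vanishes at `0` and has derivative `y sin y > 0` on `(0, π)`. Hence `h''`,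
then `h'`, then `h` are positive on `(0, 2π)`, each vanishing at `0` with positive derivative.
-/

open Set Real

lemma pos_of_hasDerivAt_pos {f f' : ℝ → ℝ} {a b : ℝ} (hf : ∀ x, HasDerivAt f (f' x) x)
    (ha : f a = 0) (hf' : ∀ x ∈ Ioo a b, 0 < f' x) : ∀ x ∈ Ioo a b, 0 < f x := by
  intro x hx
  have hmono : StrictMonoOn f (Icc a b) := by
    refine strictMonoOn_of_deriv_pos (convex_Icc a b)
      (fun y _ => (hf y).continuousAt.continuousWithinAt) fun y hy => ?_
    rw [interior_Icc] at hy
    exact (hf y).deriv ▸ hf' y hy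
  simpa [ha] using hmono (left_mem_Icc.2 (hx.1.trans hx.2).le) (Ioo_subset_Icc_self hx) hx.1

lemma sin_sub_mul_cos_pos {y : ℝ} (hy : y ∈ Ioo 0 π) : 0 < sin y - y * cos y := by
  have hderiv (x : ℝ) : HasDerivAt (fun t => sin t - t * cos t) (x * sin x) x :=
    ((hasDerivAt_sin x).sub ((hasDerivAt_id' x).mul (hasDerivAt_cos x))).congr_deriv
      (by ring)
  exact pos_of_hasDerivAt_pos hderiv (by simp)
    (fun x hx => mul_pos hx.1 (sin_pos_of_pos_of_lt_pi hx.1 hx.2)) y hy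

lemma two_sub_two_mul_cos_sub_mul_sin_pos {x : ℝ} (hx : x ∈ Ioo 0 (2 * π)) :
    0 < 2 - 2 * cos x - x * sin x := by
  obtain ⟨y, rfl⟩ : ∃ y, x = 2 * y := ⟨x / 2, by ring⟩
  have hy : y ∈ Ioo 0 π := ⟨by linarith [hx.1], by linarith [hx.2]⟩
  have hfactor : 2 - 2 * cos (2 * y) - 2 * y * sin (2 * y) =
      4 * sin y * (sin y - y * cos y) := by
    rw [cos_two_mul, sin_two_mul]
    nlinarith [sin_sq_add_cos_sq y]
  rw [hfactor]
  exact mul_pos (mul_pos four_pos (sin_pos_of_pos_of_lt_pi hy.1 hy.2)) (sin_sub_mul_cos_pos hy)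

lemma two_mul_sub_three_mul_sin_add_mul_cos_pos {x : ℝ} (hx : x ∈ Ioo 0 (2 * π)) :
    0 < 2 * x - 3 * sin x + x * cos x := by
  have hderiv (x : ℝ) : HasDerivAt (fun t => 2 * t - 3 * sin t + t * cos t)
      (2 - 2 * cos x - x * sin x) x :=
    ((((hasDerivAt_id' x).const_mul 2).sub ((hasDerivAt_sin x).const_mul 3)).add
      ((hasDerivAt_id' x).mul (hasDerivAt_cos x))).congr_deriv (by ring)
  exact pos_of_hasDerivAt_pos hderiv (by simp)
    (fun _ hx => two_sub_two_mul_cos_sub_mul_sin_pos hx) x hx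

lemma sq_sub_four_add_four_mul_cos_add_mul_sin_pos {x : ℝ} (hx : x ∈ Ioo 0 (2 * π)) :
    0 < x ^ 2 - 4 + 4 * cos x + x * sin x := by
  have hderiv (x : ℝ) : HasDerivAt (fun t => t ^ 2 - 4 + 4 * cos t + t * sin t)
      (2 * x - 3 * sin x + x * cos x) x :=
    ((((hasDerivAt_pow 2 x).sub_const 4).add ((hasDerivAt_cos x).const_mul 4)).add
      ((hasDerivAt_id' x).mul (hasDerivAt_sin x))).congr_deriv (by ring)
  exact pos_of_hasDerivAt_pos hderiv (by simp)
    (fun _ hx => two_mul_sub_three_mul_sin_add_mul_cos_pos hx) x hx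

/-- Lemma: `f₂(u) = −1 + 4u² + cos(4u) + u·sin(4u) > 0` for `u ∈ (0, π/2)`. -/
theorem f2_pos :
    ∀ u ∈ Ioo 0 (π/2),
      0 < -1 + 4 * u ^ 2 + cos (4 * u) + u * sin (4 * u) := by
  intro u hu
  have h := sq_sub_four_add_four_mul_cos_add_mul_sin_pos (x := 4 * u)
    ⟨by linarith [hu.1], by linarith [hu.2]⟩
  linarith
end

section
/- For every u ∈ (0, π/2) and every x ∈ [0, 1] one has D₀(u) + D₂(u)·x + D₄(u)·x² > 0, where D₄(u) = (sin(4u) − 4u)·(4u² + u·sin(4u) + cos(4u) − 1) and D₂(u) = −D₄(u). -/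
/-!
`D₂ x + D₄ x² = -D₄ · x(1 - x)`, so it suffices that `D₀ > 0` and `D₄ ≤ 0` on `(0, π/2)`.
Both follow by replacing every `sin`/`cos` by a Taylor polynomial on the side that makes the
inequality harder: for `t ≥ 0` the Maclaurin remainders of `sin` and `cos` alternate in sign with
the order, which is proved by integrating `cos ≤ 1` repeatedly. What remains are polynomial
inequalities in `v = u²` on `[0, (π/2)²] ⊆ [0, 2.4675]`.
-/

open Set Real Finset
open scoped Nat

noncomputable def cosTaylor (n : ℕ) (t : ℝ) : ℝ :=
  ∑ i ∈ range n, (-1) ^ i * t ^ (2 * i) / (2 * i)!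
noncomputable def sinTaylor (n : ℕ) (t : ℝ) : ℝ :=
  ∑ i ∈ range n, (-1) ^ i * t ^ (2 * i + 1) / (2 * i + 1)!

theorem hasDerivAt_sinTaylor (n : ℕ) (t : ℝ) : HasDerivAt (sinTaylor n) (cosTaylor n t) t := by
  unfold sinTaylor cosTaylor
  refine HasDerivAt.fun_sum fun i _ => ?_
  refine (((hasDerivAt_pow (2 * i + 1) t).const_mul ((-1 : ℝ) ^ i)).div_const _).congr_deriv ?_
  rw [Nat.factorial_succ]; push_cast; field_simp

theorem cosTaylor_succ (n : ℕ) (t : ℝ) :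
    cosTaylor (n + 1) t = 1 - ∑ i ∈ range n, (-1) ^ i * t ^ (2 * i + 2) / (2 * i + 2)! := by
  simp only [cosTaylor, sum_range_succ', sub_eq_add_neg, ← sum_neg_distrib]
  simp [pow_succ, mul_add, add_comm, neg_div]

theorem hasDerivAt_cosTaylor_succ (n : ℕ) (t : ℝ) :
    HasDerivAt (cosTaylor (n + 1)) (-sinTaylor n t) t := by
  rw [funext (cosTaylor_succ n), sinTaylor]
  refine (HasDerivAt.fun_sum fun i _ => ?_).const_sub (1 : ℝ)
  refine (((hasDerivAt_pow (2 * i + 2) t).const_mul ((-1 : ℝ) ^ i)).div_const _).congr_deriv ?_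
  rw [Nat.factorial_succ (2 * i + 1)]; push_cast; field_simp; ring

theorem nonneg_of_hasDerivAt_nonneg {F F' : ℝ → ℝ} (hF : ∀ t, HasDerivAt F (F' t) t)
    (h0 : F 0 = 0) (hF' : ∀ t, 0 ≤ t → 0 ≤ F' t) {t : ℝ} (ht : 0 ≤ t) : 0 ≤ F t := by
  have hmono : MonotoneOn F (Ici 0) :=
    monotoneOn_of_hasDerivWithinAt_nonneg (convex_Ici 0)
      (fun x _ => (hF x).continuousAt.continuousWithinAt) (fun x _ => (hF x).hasDerivWithinAt)
      (fun x hx => hF' x (interior_subset hx))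
  simpa [h0] using hmono self_mem_Ici ht ht

theorem sin_taylor_remainder_of_cos {n : ℕ}
    (h : ∀ t, 0 ≤ t → 0 ≤ (-1) ^ n * (cos t - cosTaylor n t)) {t : ℝ} (ht : 0 ≤ t) :
    0 ≤ (-1) ^ n * (sin t - sinTaylor n t) :=
  nonneg_of_hasDerivAt_nonneg
    (fun s => ((hasDerivAt_sin s).sub (hasDerivAt_sinTaylor n s)).const_mul _)
    (by simp [sinTaylor]) h ht

theorem cos_taylor_remainder_of_sin {n : ℕ}
    (h : ∀ t, 0 ≤ t → 0 ≤ (-1) ^ n * (sin t - sinTaylor n t)) {t : ℝ} (ht : 0 ≤ t) :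
    0 ≤ (-1) ^ (n + 1) * (cos t - cosTaylor (n + 1) t) :=
  nonneg_of_hasDerivAt_nonneg
    (fun s => (((hasDerivAt_cos s).sub (hasDerivAt_cosTaylor_succ n s)).const_mul _).congr_deriv
      (by ring))
    (by simp [cosTaylor_succ]) h ht

theorem cos_taylor_remainder_alternating (n : ℕ) {t : ℝ} (ht : 0 ≤ t) :
    0 ≤ (-1) ^ (n + 1) * (cos t - cosTaylor (n + 1) t) := by
  induction n generalizing t with
  | zero => simpa [cosTaylor] using cos_le_one t
  | succ n ih =>
    exact cos_taylor_remainder_of_sin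
      (fun _ hs => sin_taylor_remainder_of_cos (fun _ hs' => ih hs') hs) ht

theorem sin_taylor_remainder_alternating (n : ℕ) {t : ℝ} (ht : 0 ≤ t) :
    0 ≤ (-1) ^ (n + 1) * (sin t - sinTaylor (n + 1) t) :=
  sin_taylor_remainder_of_cos (fun _ hs => cos_taylor_remainder_alternating n hs) ht

noncomputable def D₀ (u : ℝ) : ℝ :=
  (1/8) * cos u * sin u * ((-48 * u ^ 2 - 3) * cos (2 * u) + 3 * cos (6 * u)
    + (42 * u - 64 * u ^ 3) * sin (2 * u) + 2 * u * sin (6 * u))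

noncomputable def D₄ (u : ℝ) : ℝ :=
  (sin (4 * u) - 4 * u) * (4 * u ^ 2 + u * sin (4 * u) + cos (4 * u) - 1)

/- Substituting the Taylor bounds of `D₀_factor_pos` into its left-hand side leaves exactly
`u ^ 10` times this polynomial in `v = u ^ 2` (and `u ^ 6` times the next one for
`D₄_factor_nonneg`). The `nlinarith` certificates are in the Bernstein basis
`v ^ k * (2.4675 - v) ^ (n - k)`. -/
theorem D₀_remainder_poly_pos {v : ℝ} (h0 : 0 ≤ v) (h1 : v ≤ 24675/10000) :
    0 < 32764/4725 - 723004/155925 * v + 52488/35035 * v ^ 2 - 39366/125125 * v ^ 3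
      + 708588/14889875 * v ^ 4 - 708588/128594375 * v ^ 5 - 38263752/108919435625 * v ^ 6 := by
  have hq : 0 ≤ 24675/10000 - v := by linarith
  nlinarith [pow_nonneg hq 6, mul_nonneg h0 (pow_nonneg hq 5),
    mul_nonneg (pow_nonneg h0 2) (pow_nonneg hq 4), mul_nonneg (pow_nonneg h0 3) (pow_nonneg hq 3),
    mul_nonneg (pow_nonneg h0 4) (pow_nonneg hq 2), mul_nonneg (pow_nonneg h0 5) hq,
    pow_nonneg h0 6]

theorem D₄_remainder_poly_nonneg {v : ℝ} (h0 : 0 ≤ v) (h1 : v ≤ 24675/10000) :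
    0 ≤ 128/45 - 512/315 * v + 2048/4725 * v ^ 2 - 32768/467775 * v ^ 3
      - 131072/42567525 * v ^ 4 := by
  have hq : 0 ≤ 24675/10000 - v := by linarith
  nlinarith [pow_nonneg hq 4, mul_nonneg h0 (pow_nonneg hq 3),
    mul_nonneg (pow_nonneg h0 2) (pow_nonneg hq 2), mul_nonneg (pow_nonneg h0 3) hq,
    pow_nonneg h0 4]

theorem sq_le_of_lt_pi_div_two {u : ℝ} (h0 : 0 ≤ u) (h : u < π / 2) :
    u ^ 2 ≤ 24675/10000 := by
  nlinarith [pi_lt_d6]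

theorem D₀_factor_pos {u : ℝ} (h0 : 0 < u) (h1 : u ^ 2 ≤ 24675/10000) :
    0 < (-48 * u ^ 2 - 3) * cos (2 * u) + 3 * cos (6 * u)
      + (42 * u - 64 * u ^ 3) * sin (2 * u) + 2 * u * sin (6 * u) := by
  have h2 : 0 ≤ 2 * u := by positivity
  have h6 : 0 ≤ 6 * u := by positivity
  have cos2 := cos_taylor_remainder_alternating 4 h2
  have sin2_lower := sin_taylor_remainder_alternating 5 h2
  have sin2_upper := sin_taylor_remainder_alternating 4 h2
  have cos6 := cos_taylor_remainder_alternating 11 h6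
  have sin6 := sin_taylor_remainder_alternating 9 h6
  norm_num [cosTaylor, sinTaylor, sum_range_succ, Nat.factorial]
    at cos2 sin2_lower sin2_upper cos6 sin6
  linarith [mul_le_mul_of_nonneg_left cos2 (by positivity : (0:ℝ) ≤ 48 * u ^ 2 + 3),
    mul_le_mul_of_nonneg_left sin2_lower (by positivity : (0:ℝ) ≤ 42 * u),
    mul_le_mul_of_nonneg_left sin2_upper (by positivity : (0:ℝ) ≤ 64 * u ^ 3),
    mul_le_mul_of_nonneg_left sin6 (by positivity : (0:ℝ) ≤ 2 * u),
    mul_pos (pow_pos h0 10) (D₀_remainder_poly_pos (v := u ^ 2) (by positivity) h1)]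

theorem D₀_pos {u : ℝ} (hu : u ∈ Ioo 0 (π / 2)) : 0 < D₀ u := by
  have hcos : 0 < cos u := cos_pos_of_mem_Ioo ⟨by linarith [hu.1, pi_pos], hu.2⟩
  have hsin : 0 < sin u := sin_pos_of_pos_of_lt_pi hu.1 (by linarith [hu.2, pi_pos])
  exact mul_pos (by positivity) (D₀_factor_pos hu.1 (sq_le_of_lt_pi_div_two hu.1.le hu.2))

theorem D₄_factor_nonneg {u : ℝ} (h0 : 0 ≤ u) (h1 : u ^ 2 ≤ 24675/10000) :
    0 ≤ 4 * u ^ 2 + u * sin (4 * u) + cos (4 * u) - 1 := by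
  have h4 : 0 ≤ 4 * u := by positivity
  have sin4 := sin_taylor_remainder_alternating 5 h4
  have cos4 := cos_taylor_remainder_alternating 7 h4
  norm_num [cosTaylor, sinTaylor, sum_range_succ, Nat.factorial] at sin4 cos4
  linarith [mul_le_mul_of_nonneg_left sin4 h0,
    mul_nonneg (pow_nonneg h0 6) (D₄_remainder_poly_nonneg (v := u ^ 2) (by positivity) h1)]

theorem D₄_nonpos {u : ℝ} (h0 : 0 ≤ u) (h1 : u ^ 2 ≤ 24675/10000) : D₄ u ≤ 0 :=
  mul_nonpos_of_nonpos_of_nonneg (by linarith [sin_le (by positivity : (0:ℝ) ≤ 4 * u)])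
    (D₄_factor_nonneg h0 h1)

/-- Lemma: `D₀(u) + D₂(u)·x + D₄(u)·x² > 0` for `u ∈ (0, π/2)`, `x ∈ [0,1]`,
where `D₄(u) = (sin(4u) − 4u)·(4u² + u·sin(4u) + cos(4u) − 1)` and `D₂ = −D₄`. -/
theorem J10_C2_pos :
    ∀ u ∈ Ioo 0 (π/2), ∀ x ∈ Icc (0:ℝ) 1,
      0 < (1/8) * cos u * sin u *
            ((-48 * u ^ 2 - 3) * cos (2 * u) + 3 * cos (6 * u)
              + (42 * u - 64 * u ^ 3) * sin (2 * u) + 2 * u * sin (6 * u))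
          + (-((sin (4 * u) - 4 * u) * (4 * u ^ 2 + u * sin (4 * u) + cos (4 * u) - 1))) * x
          + ((sin (4 * u) - 4 * u) * (4 * u ^ 2 + u * sin (4 * u) + cos (4 * u) - 1)) * x ^ 2 := by
  intro u hu x hx
  have hD₄ : D₄ u ≤ 0 := D₄_nonpos hu.1.le (sq_le_of_lt_pi_div_two hu.1.le hu.2)
  have hx01 : 0 ≤ x * (1 - x) := mul_nonneg hx.1 (sub_nonneg.2 hx.2)
  have hsum : 0 < D₀ u + -D₄ u * (x * (1 - x)) :=
    add_pos_of_pos_of_nonneg (D₀_pos hu) (mul_nonneg (neg_nonneg.2 hD₄) hx01)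
  convert hsum using 1
  simp only [D₀, D₄]
  ring
end
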